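/- Let S_T = [[T_x, t_x],[t_xᵀ, t_z]] be symmetric positive definite and S_B = [[B_x, b_x],[b_xᵀ, b_z]] symmetric positive semi-definite, with t_x = 0. Then trace(S_T⁻¹ S_B) − trace(T_x⁻¹ B_x) = b_z / t_z. -/

import Mathlib

open Matrix

namespace Matrix

variable {m n R : Type*} [Fintype m] [Fintype n]

theorem trace_fromBlocks [AddCommMonoid R] (A : Matrix m m R) (B : Matrix m n R)
    (C : Matrix n m R) (D : Matrix n n R) :
    (fromBlocks A B C D).trace = A.trace + D.trace := by
  simp [trace, Fintype.sum_sum_type]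

variable [DecidableEq m] [DecidableEq n] [CommRing R]

theorem inv_fromBlocks_zero_zero {A : Matrix m m R} {D : Matrix n n R}
    (h : IsUnit (fromBlocks A 0 0 D)) :
    (fromBlocks A 0 0 D)⁻¹ = fromBlocks A⁻¹ 0 0 D⁻¹ := by
  obtain ⟨hA, hD⟩ := isUnit_fromBlocks_zero₂₁.mp h
  simpa using inv_fromBlocks_zero₂₁_of_isUnit_iff A 0 D (iff_of_true hA hD)

theorem trace_inv_fromBlocks_zero_zero_mul {A : Matrix m m R} {D : Matrix n n R}
    (h : IsUnit (fromBlocks A 0 0 D)) (P : Matrix m m R) (Q : Matrix m n R)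
    (S : Matrix n m R) (T : Matrix n n R) :
    ((fromBlocks A 0 0 D)⁻¹ * fromBlocks P Q S T).trace = (A⁻¹ * P).trace + (D⁻¹ * T).trace := by
  simp [inv_fromBlocks_zero_zero h, fromBlocks_multiply, trace_fromBlocks]

theorem trace_inv_mul_fin_one {K : Type*} [Field K] (D T : Matrix (Fin 1) (Fin 1) K) :
    (D⁻¹ * T).trace = T 0 0 / D 0 0 := by
  simp [trace, div_eq_inv_mul]

end Matrix

theorem pillai_trace_increment_indep_general (K : ℕ)
    (Tx Bx : Matrix (Fin K) (Fin K) ℝ)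
    (bx : Matrix (Fin K) (Fin 1) ℝ)
    (tz bz : Matrix (Fin 1) (Fin 1) ℝ)
    (hT : (Matrix.fromBlocks Tx 0 0 tz).PosDef) :
    Matrix.trace ((Matrix.fromBlocks Tx 0 0 tz)⁻¹ *
        Matrix.fromBlocks Bx bx bxᵀ bz) -
      Matrix.trace (Tx⁻¹ * Bx) = bz 0 0 / tz 0 0 := by
  rw [trace_inv_fromBlocks_zero_zero_mul hT.isUnit, add_sub_cancel_left, trace_inv_mul_fin_one]

/-- When the cross-covariance `t_x` is zero, the increment in Pillai's trace
equals `b_z / t_z`. -/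
theorem pillai_trace_increment_indep (K : ℕ)
    (Tx Bx : Matrix (Fin K) (Fin K) ℝ)
    (bx : Matrix (Fin K) (Fin 1) ℝ)
    (tz bz : Matrix (Fin 1) (Fin 1) ℝ)
    (hT : (Matrix.fromBlocks Tx 0 0 tz).PosDef)
    (hB : (Matrix.fromBlocks Bx bx bxᵀ bz).PosSemidef) :
    Matrix.trace ((Matrix.fromBlocks Tx 0 0 tz)⁻¹ *
        Matrix.fromBlocks Bx bx bxᵀ bz) -
      Matrix.trace (Tx⁻¹ * Bx) = bz 0 0 / tz 0 0 :=
  pillai_trace_increment_indep_general K Tx Bx bx tz bz hT
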